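/- arXiv:1511.00567 — 4 statements merged into one kernel-verified Lean document; each statement's English description precedes it below -/
import Mathlib

section
/- Define the drop-point buffer occupancy B_c(t) = R_d·(t − α_c) for t ∈ [α_c, μ_c], B_c(t) = B_max,c − (R_p − R_d)·(t − μ_c) for t ∈ [μ_c, ω_c], and B_c(t) = M − R_p·(t − ω_c) for t ∈ [ω_c, β_c], where B_max,c = G_c − (R_d/R_p)·(G_c − M). If 0 < R_d < R_p and 0 ≤ M ≤ G_c, then B_c(t) ≤ B_max,c for all t ∈ [α_c, β_c], and B_c(μ_c) = B_max,c; i.e., the maximum buffer occupancy is attained at the instant μ_c when the ONU starts transmitting the CPE data. -/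
/-! The occupancy rises at rate `Rd` until `μ`, where `Rd * (μ - α) = Bmax`, then drains at
rate `Rp - Rd ≥ 0` until `ω` and at rate `Rp` afterwards, starting from `M ≤ Bmax`. -/

open Set

theorem Set.Icc_subset_Icc_union_Icc_union_Icc {X : Type*} [LinearOrder X] {a b c d : X} :
    Icc a d ⊆ Icc a b ∪ Icc b c ∪ Icc c d :=
  Icc_subset_Icc_union_Icc.trans (union_subset_union_right _ Icc_subset_Icc_union_Icc) |>.trans
    (union_assoc _ _ _).symm.subset

theorem buffer_max_at_mu_general
    (α G M Rd Rp ω β μ Bmax : ℝ) (B : ℝ → ℝ)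
    (hRd : 0 < Rd) (hRdRp : Rd < Rp)
    (hMG : M ≤ G)
    (hω : ω = α + G / Rd)
    (hβ : β = ω + M / Rp)
    (hμ : μ = β - G / Rp)
    (hBmax : Bmax = G - (Rd / Rp) * (G - M))
    (hB1 : ∀ t ∈ Set.Icc α μ, B t = Rd * (t - α))
    (hB2 : ∀ t ∈ Set.Icc μ ω, B t = Bmax - (Rp - Rd) * (t - μ))
    (hB3 : ∀ t ∈ Set.Icc ω β, B t = M - Rp * (t - ω)) :
    (∀ t ∈ Set.Icc α β, B t ≤ Bmax) ∧ B μ = Bmax := by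
  have hRp : 0 < Rp := hRd.trans hRdRp
  have hpeak : Rd * (μ - α) = Bmax := by
    subst hμ hβ hω hBmax
    field_simp
    ring
  have hμω : μ ≤ ω := by
    have : M / Rp ≤ G / Rp := div_le_div_of_nonneg_right hMG hRp.le
    linarith
  have hMBmax : M ≤ Bmax := by
    have : Rd / Rp ≤ 1 := (div_le_one hRp).mpr hRdRp.le
    nlinarith
  refine ⟨fun t ht ↦ ?_, by simpa using hB2 μ ⟨le_rfl, hμω⟩⟩
  rcases Icc_subset_Icc_union_Icc_union_Icc ht with (hrise | hdrain) | hflush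
  · rw [hB1 t hrise, ← hpeak]
    exact mul_le_mul_of_nonneg_left (by linarith [hrise.2]) hRd.le
  · rw [hB2 t hdrain]
    exact sub_le_self _ (mul_nonneg (by linarith) (by linarith [hdrain.1]))
  · rw [hB3 t hflush]
    exact (sub_le_self _ (mul_nonneg hRp.le (by linarith [hflush.1]))).trans hMBmax

/-- The piecewise drop-point buffer occupancy `B` attains its maximum
`Bmax = G - (Rd/Rp) * (G - M)` at the instant `μ`, and `B t ≤ Bmax`
for all `t ∈ [α, β]`. -/
theorem buffer_max_at_mu
    (α G M Rd Rp ω β μ Bmax : ℝ) (B : ℝ → ℝ)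
    (hRd : 0 < Rd) (hRdRp : Rd < Rp)
    (hM : 0 ≤ M) (hMG : M ≤ G)
    (hω : ω = α + G / Rd)
    (hβ : β = ω + M / Rp)
    (hμ : μ = β - G / Rp)
    (hBmax : Bmax = G - (Rd / Rp) * (G - M))
    (hB1 : ∀ t ∈ Set.Icc α μ, B t = Rd * (t - α))
    (hB2 : ∀ t ∈ Set.Icc μ ω, B t = Bmax - (Rp - Rd) * (t - μ))
    (hB3 : ∀ t ∈ Set.Icc ω β, B t = M - Rp * (t - ω)) :
    (∀ t ∈ Set.Icc α β, B t ≤ Bmax) ∧ B μ = Bmax :=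
  buffer_max_at_mu_general α G M Rd Rp ω β μ Bmax B hRd hRdRp hMG hω hβ hμ hBmax hB1 hB2 hB3
end

section
/- Define the drop-point buffer occupancy B_c(t) = R_d·(t − α_c) for t ∈ [α_c, μ_c], B_c(t) = B_max,c − (R_p − R_d)·(t − μ_c) for t ∈ [μ_c, ω_c], and B_c(t) = M − R_p·(t − ω_c) for t ∈ [ω_c, β_c], where B_max,c = G_c − (R_d/R_p)·(G_c − M). If 0 < R_d < R_p and 0 ≤ M ≤ G_c, then B_c(t) ≥ 0 for all t ∈ [α_c, β_c], and B_c(β_c) = 0. -/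
/-! On `[α, μ]` the buffer fills at rate `R_d`, so it is nonnegative there. On the two later
pieces it drains linearly, so it suffices to check their right endpoints: draining from
`B_max` for the time `ω - μ = (G - M)/R_p` leaves exactly `M` in the buffer at `ω`, and
draining `M` at rate `R_p` for the time `β - ω = M/R_p` empties it at `β`. -/

lemma sub_mul_sub_nonneg_of_le {R : Type*} [CommRing R] [PartialOrder R] [IsOrderedRing R]
    {c s a t u : R} (hs : 0 ≤ s) (htu : t ≤ u) (hu : 0 ≤ c - s * (u - a)) :
    0 ≤ c - s * (t - a) :=
  hu.trans (by gcongr)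

lemma peak_sub_drain_eq {K : Type*} [Field K] {G M Rd Rp : K} (hRp : Rp ≠ 0) :
    G - Rd / Rp * (G - M) - (Rp - Rd) * ((G - M) / Rp) = M := by
  field_simp
  ring

theorem buffer_nonneg_and_zero_at_beta_general
    (α G M Rd Rp ω β μ Bmax : ℝ) (B : ℝ → ℝ)
    (hRd : 0 < Rd) (hRdRp : Rd < Rp)
    (hM : 0 ≤ M)
    (hβ : β = ω + M / Rp)
    (hμ : μ = β - G / Rp)
    (hBmax : Bmax = G - (Rd / Rp) * (G - M))
    (hB1 : ∀ t ∈ Set.Icc α μ, B t = Rd * (t - α))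
    (hB2 : ∀ t ∈ Set.Icc μ ω, B t = Bmax - (Rp - Rd) * (t - μ))
    (hB3 : ∀ t ∈ Set.Icc ω β, B t = M - Rp * (t - ω)) :
    (∀ t ∈ Set.Icc α β, 0 ≤ B t) ∧ B β = 0 := by
  have hRp : 0 < Rp := hRd.trans hRdRp
  have hβω : β - ω = M / Rp := by rw [hβ]; ring
  have hωβ : ω ≤ β := by rw [← sub_nonneg, hβω]; positivity
  have hB_ω : Bmax - (Rp - Rd) * (ω - μ) = M := by
    rw [hBmax, show ω - μ = (G - M) / Rp by rw [hμ, hβ]; ring]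
    exact peak_sub_drain_eq hRp.ne'
  have hB_β : M - Rp * (β - ω) = 0 := by rw [hβω, mul_div_cancel₀ M hRp.ne', sub_self]
  refine ⟨fun t ⟨hαt, htβ⟩ => ?_, by rw [hB3 β ⟨hωβ, le_rfl⟩, hB_β]⟩
  rcases le_or_gt t μ with htμ | hμt
  · rw [hB1 t ⟨hαt, htμ⟩]
    exact mul_nonneg hRd.le (sub_nonneg.2 hαt)
  rcases le_or_gt t ω with htω | hωt
  · rw [hB2 t ⟨hμt.le, htω⟩]
    exact sub_mul_sub_nonneg_of_le (sub_nonneg.2 hRdRp.le) htω (hB_ω ▸ hM)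
  · rw [hB3 t ⟨hωt.le, htβ⟩]
    exact sub_mul_sub_nonneg_of_le hRp.le htβ hB_β.ge

/-- The piecewise drop-point buffer occupancy `B` is nonnegative on
`[α, β]` and vanishes at `β`. -/
theorem buffer_nonneg_and_zero_at_beta
    (α G M Rd Rp ω β μ Bmax : ℝ) (B : ℝ → ℝ)
    (hRd : 0 < Rd) (hRdRp : Rd < Rp)
    (hM : 0 ≤ M) (hMG : M ≤ G)
    (hω : ω = α + G / Rd)
    (hβ : β = ω + M / Rp)
    (hμ : μ = β - G / Rp)
    (hBmax : Bmax = G - (Rd / Rp) * (G - M))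
    (hB1 : ∀ t ∈ Set.Icc α μ, B t = Rd * (t - α))
    (hB2 : ∀ t ∈ Set.Icc μ ω, B t = Bmax - (Rp - Rd) * (t - μ))
    (hB3 : ∀ t ∈ Set.Icc ω β, B t = M - Rp * (t - ω)) :
    (∀ t ∈ Set.Icc α β, 0 ≤ B t) ∧ B β = 0 :=
  buffer_nonneg_and_zero_at_beta_general α G M Rd Rp ω β μ Bmax B hRd hRdRp hM hβ hμ hBmax hB1 hB2
    hB3
end

section
/- Let E ≥ 1, R_d > 0, R_p > 0 with E·R_d ≤ R_p, let s_1, …, s_E ∈ ℝ and G_1, …, G_E ≥ 0, and define the cumulative fluid arrival function A(t) = Σ_{c=1}^E R_d · min( max(t − s_c, 0), G_c/R_d ). Let ω = max over c of (s_c + G_c/R_d) and μ = ω − (Σ_{c=1}^E G_c)/R_p. Then for all t ∈ [μ, ω], A(t) ≥ R_p·(t − μ); i.e., an ONU draining the multiplexed CPE fluid at rate R_p starting at μ never transmits more data than has arrived. -/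
/-!
By time `t ≤ ω` a CPE finishing at `s_c + G_c/R_d ≤ ω` has at most `R_d (ω - t)` bits left
to send, so `A t ≥ ∑ G - E R_d (ω - t) ≥ ∑ G - R_p (ω - t)`, and the right-hand side is
`R_p (t - μ)` by the choice of `μ`.
-/

open Finset

theorem sub_mul_le_mul_min_max {r : ℝ} (hr : 0 < r) {s g ω t : ℝ}
    (hfin : s + g / r ≤ ω) (ht : t ≤ ω) :
    g - r * (ω - t) ≤ r * min (max (t - s) 0) (g / r) :=
  calc g - r * (ω - t) = r * (g / r - (ω - t)) := by field_simp
    _ ≤ r * min (max (t - s) 0) (g / r) :=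
      mul_le_mul_of_nonneg_left
        (le_min (le_max_of_le_left (by linarith)) (by linarith)) hr.le

theorem sum_sub_card_mul_le_sum_mul_min_max {ι : Type*} (S : Finset ι) {r : ℝ} (hr : 0 < r)
    (s g : ι → ℝ) {ω t : ℝ} (hfin : ∀ c ∈ S, s c + g c / r ≤ ω) (ht : t ≤ ω) :
    ∑ c ∈ S, g c - #S * r * (ω - t) ≤ ∑ c ∈ S, r * min (max (t - s c) 0) (g c / r) :=
  calc ∑ c ∈ S, g c - #S * r * (ω - t) = ∑ c ∈ S, (g c - r * (ω - t)) := by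
        rw [sum_sub_distrib, sum_const, nsmul_eq_mul, mul_assoc]
    _ ≤ ∑ c ∈ S, r * min (max (t - s c) 0) (g c / r) :=
      sum_le_sum fun c hc => sub_mul_le_mul_min_max hr (hfin c hc) ht

theorem multiplexed_fluid_feasible_general
    (E : ℕ) (hE : 1 ≤ E)
    (Rd Rp : ℝ) (hRd : 0 < Rd) (hRp : 0 < Rp)
    (hrate : (E : ℝ) * Rd ≤ Rp)
    (s G : ℕ → ℝ)
    (A : ℝ → ℝ)
    (hA : ∀ t, A t = ∑ c ∈ Finset.Icc 1 E,
      Rd * min (max (t - s c) 0) (G c / Rd))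
    (ω μ : ℝ)
    (hω : ω = (Finset.Icc 1 E).sup'
      (Finset.nonempty_Icc.mpr hE) (fun c => s c + G c / Rd))
    (hμ : μ = ω - (∑ c ∈ Finset.Icc 1 E, G c) / Rp) :
    ∀ t ∈ Set.Icc μ ω, A t ≥ Rp * (t - μ) := by
  rintro t ⟨-, htω⟩
  have hfin : ∀ c ∈ Icc 1 E, s c + G c / Rd ≤ ω := fun c hc =>
    hω ▸ le_sup' (fun c => s c + G c / Rd) hc
  have hbound := sum_sub_card_mul_le_sum_mul_min_max (Icc 1 E) hRd s G hfin htω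
  rw [Nat.card_Icc, add_tsub_cancel_right, ← hA] at hbound
  have htotal : ∑ c ∈ Icc 1 E, G c = Rp * (ω - μ) := by
    rw [hμ]; field_simp; ring
  calc Rp * (t - μ) = ∑ c ∈ Icc 1 E, G c - Rp * (ω - t) := by rw [htotal]; ring
    _ ≤ ∑ c ∈ Icc 1 E, G c - E * Rd * (ω - t) :=
      sub_le_sub_left (mul_le_mul_of_nonneg_right hrate (sub_nonneg.2 htω)) _
    _ ≤ A t := hbound

/-- Fluid model of multiplexed CPE transmissions: an ONU draining the
multiplexed CPE fluid at rate `Rp` starting at `μ = ω - (∑ G)/Rp` never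
transmits more data than has arrived, i.e., `A t ≥ Rp * (t - μ)` for all
`t ∈ [μ, ω]`. -/
theorem multiplexed_fluid_feasible
    (E : ℕ) (hE : 1 ≤ E)
    (Rd Rp : ℝ) (hRd : 0 < Rd) (hRp : 0 < Rp)
    (hrate : (E : ℝ) * Rd ≤ Rp)
    (s G : ℕ → ℝ) (hG : ∀ c, 0 ≤ G c)
    (A : ℝ → ℝ)
    (hA : ∀ t, A t = ∑ c ∈ Finset.Icc 1 E,
      Rd * min (max (t - s c) 0) (G c / Rd))
    (ω μ : ℝ)
    (hω : ω = (Finset.Icc 1 E).sup'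
      (Finset.nonempty_Icc.mpr hE) (fun c => s c + G c / Rd))
    (hμ : μ = ω - (∑ c ∈ Finset.Icc 1 E, G c) / Rp) :
    ∀ t ∈ Set.Icc μ ω, A t ≥ Rp * (t - μ) :=
  multiplexed_fluid_feasible_general E hE Rd Rp hRd hRp hrate s G A hA ω μ hω hμ
end

section
/- Let g_p, g_d, τ, δ_1, δ_2, G_1, G_2, M ∈ ℝ and 0 < R_d < R_p. Define the completion times for the two transmission orders with back-to-back PON transmission as T^{12} = 3g_p + g_d + 2τ + 2δ_1 + G_1/R_d + (M + G_2)/R_p and T^{21} = 3g_p + g_d + 2τ + 2δ_2 + G_2/R_d + (M + G_1)/R_p. Then T^{12} ≤ T^{21} if and only if G_1 ≤ G_2 + 2·(δ_2 − δ_1)/(1/R_d − 1/R_p); i.e., transmitting CPE 1's data first yields the shorter completion time exactly when G_1 is at most the threshold G_1^{th2}. -/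
/-- `G` is the grant of the CPE (at delay `δ`) served first; `G'` follows back-to-back on the PON. -/
noncomputable def completionTime (gp gd τ δ G G' M Rd Rp : ℝ) : ℝ :=
  3 * gp + gd + 2 * τ + 2 * δ + G / Rd + (M + G') / Rp

lemma completionTime_swap_sub (gp gd τ δ₁ δ₂ G₁ G₂ M Rd Rp : ℝ) :
    completionTime gp gd τ δ₂ G₂ G₁ M Rd Rp - completionTime gp gd τ δ₁ G₁ G₂ M Rd Rp =
      2 * (δ₂ - δ₁) - (G₁ - G₂) * (1 / Rd - 1 / Rp) := by
  unfold completionTime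
  ring

lemma completionTime_le_swap_iff {gp gd τ δ₁ δ₂ G₁ G₂ M Rd Rp : ℝ} (hRd : 0 < Rd)
    (hRdRp : Rd < Rp) :
    completionTime gp gd τ δ₁ G₁ G₂ M Rd Rp ≤ completionTime gp gd τ δ₂ G₂ G₁ M Rd Rp ↔
      G₁ ≤ G₂ + 2 * (δ₂ - δ₁) / (1 / Rd - 1 / Rp) := by
  have hslower : 0 < 1 / Rd - 1 / Rp := sub_pos.mpr (one_div_lt_one_div_of_lt hRd hRdRp)
  rw [← sub_nonneg, completionTime_swap_sub, sub_nonneg, ← sub_le_iff_le_add',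
    le_div_iff₀ hslower]

/-- Transmitting CPE 1's data first yields the shorter completion time,
`T¹² ≤ T²¹`, iff `G₁ ≤ G₂ + 2 * (δ₂ - δ₁) / (1/Rd - 1/Rp)`. -/
theorem order12_shorter_iff
    (gp gd τ δ₁ δ₂ G₁ G₂ M Rd Rp T12 T21 : ℝ)
    (hRd : 0 < Rd) (hRdRp : Rd < Rp)
    (hT12 : T12 = 3 * gp + gd + 2 * τ + 2 * δ₁ + G₁ / Rd + (M + G₂) / Rp)
    (hT21 : T21 = 3 * gp + gd + 2 * τ + 2 * δ₂ + G₂ / Rd + (M + G₁) / Rp) :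
    T12 ≤ T21 ↔ G₁ ≤ G₂ + 2 * (δ₂ - δ₁) / (1 / Rd - 1 / Rp) := by
  subst hT12 hT21
  exact completionTime_le_swap_iff hRd hRdRp
end
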